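/- Fix a real number p > 1 and set λ_{n,k} = (1/n³)(1 + k/n^p) for integers n ≥ 1 and 0 ≤ k ≤ n−1. Let (w_m)_{m ≥ 1} be any orthonormal (Hilbert) basis of L²(ℝ) and define h_{n,k} = (1/√n) ∑_{l=0}^{n−1} ( cos(2πkl/n) + sin(2πkl/n) ) w_{n(n−1)/2 + l + 1}. Then: (a) the family of rank-one operators ( λ_{n,k} (h_{n,k} ⊗ h̄_{n,k}) )_{n ≥ 1, 0 ≤ k ≤ n−1} is summable in operator norm on L²(ℝ), with ∑_{n=1}^∞ ∑_{k=0}^{n−1} λ_{n,k} < ∞, and its sum T is a positive semi-definite self-adjoint bounded operator; but (b) the family of nonnegative numbers ( λ_{n,k} · ( ∑_{m=1}^∞ |⟨h_{n,k}, w_m⟩| )² )_{n ≥ 1, 0 ≤ k ≤ n−1} is NOT summable: ∑_{n=1}^∞ ∑_{k=0}^{n−1} λ_{n,k} ( ∑_{m} |⟨h_{n,k}, w_m⟩| )² = ∞. -/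

import Mathlib

open scoped BigOperators ENNReal ComplexOrder InnerProductSpace
open MeasureTheory

/-- The complex Hilbert space `L²(ℝ)`. -/
noncomputable abbrev L2R : Type := Lp ℂ 2 (volume : Measure ℝ)

/-- Given vectors `(w_m)` (indexed by `ℕ`, with `w m` playing the role of `w_{m+1}`), the vector
`h_{n,k} = (1/√n) ∑_{l=0}^{n-1} (cos(2πkl/n) + sin(2πkl/n)) w_{n(n-1)/2 + l + 1} ∈ L²(ℝ)`. -/
noncomputable def hvec (w : ℕ → L2R) (n k : ℕ) : L2R :=
  ((1 / Real.sqrt n : ℝ) : ℂ) • ∑ l ∈ Finset.range n,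
    ((Real.cos (2 * Real.pi * k * l / n) + Real.sin (2 * Real.pi * k * l / n) : ℝ) : ℂ) •
      w (n * (n - 1) / 2 + l)

/-- The eigenvalue `λ_{n,k} = (1/n³)(1 + k/nᵖ)`. -/
noncomputable def lam (p : ℝ) (n k : ℕ) : ℝ := (1 / (n : ℝ) ^ 3) * (1 + (k : ℝ) / (n : ℝ) ^ p)

/-- The rank-one operator `v ⊗ v̄ : f ↦ ⟨f, v⟩ v` (with `⟨f, v⟩ = ∫ f conj v`). -/
noncomputable def rankOneC {H : Type*} [NormedAddCommGroup H] [InnerProductSpace ℂ H]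
    (v : H) : H →L[ℂ] H := (innerSL ℂ v).smulRight v

/-!
Write `cas x = cos x + sin x`, so that `h_{n,k} = n^{-1/2} ∑ₗ cas(2πkl/n) w_{b+l}` with the blocks
`[b, b + n)`, `b = n(n-1)/2`, pairwise disjoint. Since `cas² x = 1 + sin 2x` and the sines
`sin(4πkl/n)` cancel over a full period, `∑ₗ cas²(2πkl/n) = n`: each `h_{n,k}` is a unit vector, so
the rank-one terms have operator norm `λ_{n,k} ≤ 2/n³` and are summable, and a convergent sum of
positive operators is positive. On the other hand `|cas| ≤ √2` turns `∑ₗ cas² = n` into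
`∑ₗ |cas| ≥ n/√2`, so `(∑ₘ |⟨h_{n,k}, w_m⟩|)² ≥ n/2` and the `(n,k)` term of the second family is at
least `1/(2n²)`; summing over the `n` values of `k` leaves the harmonic series.
-/

open Finset Real

noncomputable def cas (x : ℝ) : ℝ := cos x + sin x

lemma cas_sq (x : ℝ) : cas x ^ 2 = 1 + sin (2 * x) := by
  rw [cas, sin_two_mul, ← sin_sq_add_cos_sq x]
  ring

lemma abs_cas_le_sqrt_two (x : ℝ) : |cas x| ≤ √2 := by
  rw [← sqrt_sq_eq_abs]
  exact sqrt_le_sqrt (by linarith [cas_sq x, sin_le_one (2 * x)])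

lemma sum_range_sin_two_pi_mul_div (m n : ℕ) :
    ∑ l ∈ range n, sin (2 * π * m * l / n) = 0 := by
  rcases eq_or_ne n 0 with rfl | hn
  · simp
  set ζ := Complex.exp (2 * π * m / n * Complex.I)
  have hsin (l : ℕ) : sin (2 * π * m * l / n) = (ζ ^ l).im := by
    rw [← Complex.exp_nat_mul, ← Complex.exp_ofReal_mul_I_im]
    push_cast
    ring_nf
  have hζ : ζ ^ n = 1 := by
    rw [← Complex.exp_nat_mul, ← Complex.exp_nat_mul_two_pi_mul_I m]
    congr 1
    field_simp
  simp_rw [hsin, ← Complex.im_sum]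
  rcases eq_or_ne ζ 1 with h1 | h1
  · simp [h1]
  · simp [geom_sum_eq h1, hζ]

lemma sum_range_cas_sq (k n : ℕ) : ∑ l ∈ range n, cas (2 * π * k * l / n) ^ 2 = n := by
  have hdouble (l : ℕ) : 2 * (2 * π * k * l / n) = 2 * π * (2 * k : ℕ) * l / n := by
    push_cast
    ring
  simp_rw [cas_sq, hdouble]
  rw [sum_add_distrib, sum_range_sin_two_pi_mul_div]
  simp

lemma div_sqrt_two_le_sum_range_abs_cas (k n : ℕ) :
    n / √2 ≤ ∑ l ∈ range n, |cas (2 * π * k * l / n)| := by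
  rw [div_le_iff₀ (by positivity), sum_mul]
  calc (n : ℝ) = ∑ l ∈ range n, |cas (2 * π * k * l / n)| * |cas (2 * π * k * l / n)| := by
        simp_rw [abs_mul_abs_self, ← sq, sum_range_cas_sq]
    _ ≤ _ := sum_le_sum fun l _ => mul_le_mul_of_nonneg_left (abs_cas_le_sqrt_two _) (abs_nonneg _)

section Orthonormal

variable {𝕜 E ι : Type*} [RCLike 𝕜] [SeminormedAddCommGroup E] [InnerProductSpace 𝕜 E]
  {v : ι → E}

lemma Orthonormal.inner_left_sum_of_notMem (hv : Orthonormal 𝕜 v) (l : ι → 𝕜) {s : Finset ι}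
    {i : ι} (hi : i ∉ s) : ⟪∑ j ∈ s, l j • v j, v i⟫_𝕜 = 0 := by
  classical
  simp [sum_inner, inner_smul_left, orthonormal_iff_ite.mp hv, hi]

lemma Orthonormal.tsum_norm_inner_left_sum (hv : Orthonormal 𝕜 v) (l : ι → 𝕜) (s : Finset ι) :
    ∑' i, ‖⟪∑ j ∈ s, l j • v j, v i⟫_𝕜‖ = ∑ i ∈ s, ‖l i‖ := by
  rw [tsum_eq_sum fun i hi => by rw [hv.inner_left_sum_of_notMem l hi, norm_zero]]
  exact sum_congr rfl fun i hi => by rw [hv.inner_left_sum l hi, RCLike.norm_conj]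

lemma Orthonormal.norm_sum_smul_sq (hv : Orthonormal 𝕜 v) (l : ι → 𝕜) (s : Finset ι) :
    ‖∑ i ∈ s, l i • v i‖ ^ 2 = ∑ i ∈ s, ‖l i‖ ^ 2 := by
  have h := hv.inner_sum l l s
  simp only [inner_self_eq_norm_sq_to_K, RCLike.conj_mul] at h
  exact_mod_cast h

end Orthonormal

lemma hvec_eq_sum_Ico (w : ℕ → L2R) (n k : ℕ) :
    hvec w n k = ∑ m ∈ Ico (n * (n - 1) / 2) (n * (n - 1) / 2 + n),
      (((√n)⁻¹ * cas (2 * π * k * (m - n * (n - 1) / 2 : ℕ) / n) : ℝ) : ℂ) • w m := by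
  rw [hvec, smul_sum, sum_Ico_eq_sum_range, add_tsub_cancel_left]
  refine sum_congr rfl fun l _ => ?_
  rw [smul_smul, add_tsub_cancel_left, one_div, cas]
  push_cast
  rfl

lemma norm_hvec {w : ℕ → L2R} (hw : Orthonormal ℂ w) {n : ℕ} (hn : 0 < n) (k : ℕ) :
    ‖hvec w n k‖ = 1 := by
  have hsq : ‖hvec w n k‖ ^ 2 = 1 := by
    rw [hvec_eq_sum_Ico, hw.norm_sum_smul_sq, sum_Ico_eq_sum_range, add_tsub_cancel_left]
    simp_rw [add_tsub_cancel_left, Complex.norm_real, Real.norm_eq_abs, sq_abs, mul_pow,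
      ← mul_sum, sum_range_cas_sq, inv_pow, sq_sqrt (Nat.cast_nonneg n)]
    field_simp
  exact (pow_eq_one_iff_of_nonneg (norm_nonneg _) two_ne_zero).1 hsq

lemma tsum_norm_inner_hvec {w : ℕ → L2R} (hw : Orthonormal ℂ w) (n k : ℕ) :
    ∑' m, ‖⟪hvec w n k, w m⟫_ℂ‖ = (√n)⁻¹ * ∑ l ∈ range n, |cas (2 * π * k * l / n)| := by
  rw [hvec_eq_sum_Ico, hw.tsum_norm_inner_left_sum, sum_Ico_eq_sum_range, add_tsub_cancel_left,
    mul_sum]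
  simp_rw [add_tsub_cancel_left, Complex.norm_real, Real.norm_eq_abs, abs_mul,
    abs_of_nonneg (inv_nonneg.2 (sqrt_nonneg _))]

lemma half_le_sq_tsum_norm_inner_hvec {w : ℕ → L2R} (hw : Orthonormal ℂ w) (n k : ℕ) :
    n / 2 ≤ (∑' m, ‖⟪hvec w n k, w m⟫_ℂ‖) ^ 2 := by
  rw [tsum_norm_inner_hvec hw]
  calc (n : ℝ) / 2 = ((√n)⁻¹ * (n / √2)) ^ 2 := by
        rw [mul_pow, div_pow, inv_pow, sq_sqrt (Nat.cast_nonneg n), sq_sqrt zero_le_two]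
        rcases eq_or_ne (n : ℝ) 0 with hn | hn
        · simp [hn]
        · field_simp
    _ ≤ _ := by gcongr; exact div_sqrt_two_le_sum_range_abs_cas k n

lemma ContinuousLinearMap.IsPositive.of_hasSum {ι H : Type*} [NormedAddCommGroup H]
    [InnerProductSpace ℂ H] [CompleteSpace H] {f : ι → H →L[ℂ] H} {T : H →L[ℂ] H}
    (hT : HasSum f T) (hf : ∀ i, (f i).IsPositive) : T.IsPositive := by
  simp only [← ContinuousLinearMap.nonneg_iff_isPositive] at hf ⊢
  exact hT.nonneg hf

section rankOneC

variable {H : Type*} [NormedAddCommGroup H] [InnerProductSpace ℂ H]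

lemma norm_rankOneC (v : H) : ‖rankOneC v‖ = ‖v‖ ^ 2 := by
  rw [sq, ← InnerProductSpace.norm_rankOne (𝕜 := ℂ)]
  rfl

lemma isPositive_rankOneC (v : H) : (rankOneC v).IsPositive :=
  InnerProductSpace.isPositive_rankOne_self v

end rankOneC

lemma ENNReal.tsum_ofReal_eq_top_of_not_summable {α : Type*} {f : α → ℝ} (hf : ∀ a, 0 ≤ f a)
    (h : ¬Summable f) : ∑' a, ENNReal.ofReal (f a) = ⊤ := by
  by_contra htop
  exact h ((ENNReal.summable_toReal htop).congr fun a => ENNReal.toReal_ofReal (hf a))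

lemma summable_sigma_iff_summable_sum_of_nonneg {α : Type*} {β : α → Type*}
    [∀ a, Fintype (β a)] {f : (Σ a, β a) → ℝ} (hf : ∀ x, 0 ≤ f x) :
    Summable f ↔ Summable fun a => ∑ b, f ⟨a, b⟩ := by
  simp [summable_sigma_of_nonneg hf, tsum_fintype, Summable.of_finite]

lemma lam_nonneg (p : ℝ) (n k : ℕ) : 0 ≤ lam p n k := by
  unfold lam
  positivity

lemma one_div_pow_three_le_lam (p : ℝ) (n k : ℕ) : 1 / (n : ℝ) ^ 3 ≤ lam p n k :=
  le_mul_of_one_le_right (by positivity) (le_add_of_nonneg_right (by positivity))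

lemma lam_le {p : ℝ} (hp : 1 ≤ p) {n k : ℕ} (hk : k ≤ n) : lam p n k ≤ 2 / (n : ℝ) ^ 3 := by
  rcases Nat.eq_zero_or_pos n with rfl | hn
  · simp [lam]
  have hk : (k : ℝ) ≤ (n : ℝ) ^ p := calc
    (k : ℝ) ≤ n := by exact_mod_cast hk
    _ = (n : ℝ) ^ (1 : ℝ) := (rpow_one _).symm
    _ ≤ (n : ℝ) ^ p := rpow_le_rpow_of_exponent_le (by exact_mod_cast hn) hp
  rw [lam, div_eq_mul_one_div 2, mul_comm 2]
  gcongr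
  linarith [div_le_one_of_le₀ hk (by positivity)]

lemma summable_lam {p : ℝ} (hp : 1 ≤ p) :
    Summable fun i : Σ n : ℕ, Fin (n + 1) => lam p (i.1 + 1) i.2 := by
  rw [summable_sigma_iff_summable_sum_of_nonneg fun i => lam_nonneg p _ _]
  refine Summable.of_nonneg_of_le (fun n => sum_nonneg fun k _ => lam_nonneg p _ _)
    (fun n => ?_)
    (((summable_nat_add_iff 1).2 (Real.summable_one_div_nat_pow.2 one_lt_two)).mul_left 2)
  calc ∑ k : Fin (n + 1), lam p (n + 1) k ≤ ∑ _k : Fin (n + 1), 2 / ((n + 1 : ℕ) : ℝ) ^ 3 :=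
        sum_le_sum fun k _ => lam_le hp (by omega)
    _ = 2 * (1 / ((n + 1 : ℕ) : ℝ) ^ 2) := by
        rw [sum_const, card_univ, Fintype.card_fin, nsmul_eq_mul]
        field_simp

lemma one_div_two_mul_sq_le_lam_mul_sq_tsum {w : ℕ → L2R} (hw : Orthonormal ℂ w) (p : ℝ)
    (n k : ℕ) :
    1 / (2 * (n : ℝ) ^ 2) ≤ lam p n k * (∑' m, ‖⟪hvec w n k, w m⟫_ℂ‖) ^ 2 := calc
  1 / (2 * (n : ℝ) ^ 2) = 1 / (n : ℝ) ^ 3 * (n / 2) := by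
    rcases eq_or_ne (n : ℝ) 0 with hn | hn
    · simp [hn]
    · field_simp
  _ ≤ _ := mul_le_mul (one_div_pow_three_le_lam p n k) (half_le_sq_tsum_norm_inner_hvec hw n k)
      (by positivity) (lam_nonneg p n k)

lemma not_summable_lam_mul_sq_tsum {w : ℕ → L2R} (hw : Orthonormal ℂ w) (p : ℝ) :
    ¬Summable fun i : Σ n : ℕ, Fin (n + 1) =>
      lam p (i.1 + 1) i.2 * (∑' m, ‖⟪hvec w (i.1 + 1) i.2, w m⟫_ℂ‖) ^ 2 := by
  rw [summable_sigma_iff_summable_sum_of_nonneg fun i =>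
    mul_nonneg (lam_nonneg p _ _) (sq_nonneg _)]
  intro h
  refine Real.not_summable_one_div_natCast ((summable_nat_add_iff 1).1
    ((h.mul_left 2).of_nonneg_of_le (fun n => by positivity) fun n => ?_))
  calc 1 / ((n + 1 : ℕ) : ℝ) = 2 * ∑ _k : Fin (n + 1), 1 / (2 * ((n + 1 : ℕ) : ℝ) ^ 2) := by
        rw [sum_const, card_univ, Fintype.card_fin, nsmul_eq_mul]
        field_simp
    _ ≤ _ := by
        gcongr with k
        exact one_div_two_mul_sq_le_lam_mul_sq_tsum hw p _ _

theorem feichtinger_counterexample (p : ℝ) (hp : 1 < p) (w : HilbertBasis ℕ ℂ L2R) :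
    Summable (fun i : Σ n : ℕ, Fin (n + 1) => lam p (i.1 + 1) (i.2 : ℕ)) ∧
    Summable (fun i : Σ n : ℕ, Fin (n + 1) =>
      ((lam p (i.1 + 1) (i.2 : ℕ) : ℝ) : ℂ) •
        rankOneC (hvec (fun m => w m) (i.1 + 1) (i.2 : ℕ))) ∧
    (∀ T : L2R →L[ℂ] L2R,
      HasSum (fun i : Σ n : ℕ, Fin (n + 1) =>
          ((lam p (i.1 + 1) (i.2 : ℕ) : ℝ) : ℂ) •
            rankOneC (hvec (fun m => w m) (i.1 + 1) (i.2 : ℕ))) T →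
        IsSelfAdjoint T ∧ ∀ f : L2R, 0 ≤ (⟪f, T f⟫_ℂ)) ∧
    ¬ Summable (fun i : Σ n : ℕ, Fin (n + 1) =>
        lam p (i.1 + 1) (i.2 : ℕ) *
          (∑' m : ℕ, ‖⟪hvec (fun m => w m) (i.1 + 1) (i.2 : ℕ), w m⟫_ℂ‖) ^ 2) ∧
    ∑' i : Σ n : ℕ, Fin (n + 1), ENNReal.ofReal
        (lam p (i.1 + 1) (i.2 : ℕ) *
          (∑' m : ℕ, ‖⟪hvec (fun m => w m) (i.1 + 1) (i.2 : ℕ), w m⟫_ℂ‖) ^ 2) = ⊤ := by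
  have hw := w.orthonormal
  have hterm_pos (i : Σ n : ℕ, Fin (n + 1)) :
      (((lam p (i.1 + 1) i.2 : ℝ) : ℂ) • rankOneC (hvec w (i.1 + 1) i.2)).IsPositive :=
    (isPositive_rankOneC _).smul_of_nonneg (Complex.zero_le_real.2 (lam_nonneg p _ _))
  have hnorm (i : Σ n : ℕ, Fin (n + 1)) :
      ‖((lam p (i.1 + 1) i.2 : ℝ) : ℂ) • rankOneC (hvec w (i.1 + 1) i.2)‖ =
        lam p (i.1 + 1) i.2 := by
    rw [norm_smul, norm_rankOneC, norm_hvec hw i.1.succ_pos, Complex.norm_real,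
      Real.norm_of_nonneg (lam_nonneg p _ _), one_pow, mul_one]
  have hdiv := not_summable_lam_mul_sq_tsum hw p
  refine ⟨summable_lam hp.le, Summable.of_norm ?_, fun T hT => ?_, hdiv,
    ENNReal.tsum_ofReal_eq_top_of_not_summable (fun i => mul_nonneg (lam_nonneg p _ _)
      (sq_nonneg _)) hdiv⟩
  · simpa only [hnorm] using summable_lam hp.le
  · have hTpos := ContinuousLinearMap.IsPositive.of_hasSum hT hterm_pos
    exact ⟨hTpos.isSelfAdjoint, hTpos.inner_nonneg_right⟩
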